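/- arXiv:2306.09727 — 5 statements merged into one kernel-verified Lean document; each statement's English description precedes it below -/
import Mathlib

section
/- Let $R$ be a commutative ring, $I \leq R$ a nilpotent ideal, and $M$ an $R$-module such that $M/IM$ is flat as an $R/I$-module and the natural map $I \otimes_R M \to IM$ is injective. Then $M$ is a flat $R$-module. -/
/-!
By Lambek's criterion `M` is flat iff its character module `M⋆` satisfies Baer's criterion, so
it suffices to extend maps `N → M⋆` to `P` whenever `I ^ k • ⊤ ≤ N ≤ P`. By induction on `k`
(through `N ≤ N ⊔ I ^ (k - 1) • ⊤ ≤ P`) this reduces to the case `I • ⊤ ≤ N`, and along a free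
cover to `P` free. Injectivity of `I ⊗ M → M` means that every map `I → M⋆` extends to `R`;
applied coordinatewise, it extends the restriction of the given map to `I • P`. What remains is
a map on `N / (N ∩ I • P) ↪ P / I • P`, where both modules are killed by `I`. For such modules
tensoring with `M` over `R` is tensoring with `(R ⧸ I) ⊗ M ≅ M / I • M` over `R ⧸ I`, which
preserves injectivity because `M / I • M` is flat over `R ⧸ I`.
-/

open TensorProduct

section

variable {R : Type*} [CommRing R] {M : Type*} [AddCommGroup M] [Module R M] (I : Ideal R)

theorem exists_extension_of_lift_injective
    (hinj : Function.Injective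
      (lift ((LinearMap.lsmul R M).comp I.subtype) : I ⊗[R] M →ₗ[R] M))
    (g : I →ₗ[R] CharacterModule M) :
    ∃ g' : R →ₗ[R] CharacterModule M, g' ∘ₗ I.subtype = g := by
  have hlift : (lift ((LinearMap.lsmul R M).comp I.subtype) : I ⊗[R] M →ₗ[R] M) =
      (TensorProduct.lid R M).toLinearMap ∘ₗ I.subtype.rTensor M := by
    ext; simp
  rw [hlift, LinearMap.coe_comp] at hinj
  exact rTensor_injective_iff_lcomp_surjective.mp hinj.of_comp g

theorem rTensor_injective_of_isTorsionBySet
    (hflat : Module.Flat (R ⧸ I) (M ⧸ (I • (⊤ : Submodule R M))))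
    {X Y : Type*} [AddCommGroup X] [Module R X] [AddCommGroup Y] [Module R Y]
    (hX : Module.IsTorsionBySet R X I) (hY : Module.IsTorsionBySet R Y I)
    {j : X →ₗ[R] Y} (hj : Function.Injective j) :
    Function.Injective (j.rTensor M) := by
  let _ := hX.module
  let _ := hY.module
  have hmk : Function.Surjective (algebraMap R (R ⧸ I)) := Ideal.Quotient.mk_surjective
  have : Module.Flat (R ⧸ I) ((R ⧸ I) ⊗[R] M) :=
    .of_linearEquiv ((quotTensorEquivQuotSMul M I).extendScalarsOfSurjective hmk)
  let j' := j.extendScalarsOfSurjective hmk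
  let eX := AlgebraTensorModule.cancelBaseChange R (R ⧸ I) (R ⧸ I) X M
  let eY := AlgebraTensorModule.cancelBaseChange R (R ⧸ I) (R ⧸ I) Y M
  have hcomm : ∀ t, j.rTensor M (eX t) = eY (j'.rTensor _ t) := by
    intro t
    induction t using TensorProduct.induction_on with
    | zero => simp
    | add t u ht hu => simp only [map_add, ht, hu]
    | tmul x u =>
      induction u using TensorProduct.induction_on with
      | zero => simp
      | add u v hu hv => simp only [tmul_add, map_add, hu, hv]
      | tmul a m =>
        simp only [eX, eY, AlgebraTensorModule.cancelBaseChange_tmul, LinearMap.rTensor_tmul]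
        exact congrArg (· ⊗ₜ[R] m) (j'.map_smul a x)
  have hj' : Function.Injective (j'.rTensor ((R ⧸ I) ⊗[R] M)) :=
    Module.Flat.rTensor_preserves_injective_linearMap j' hj
  intro a b hab
  obtain ⟨a, rfl⟩ := eX.surjective a
  obtain ⟨b, rfl⟩ := eX.surjective b
  rw [hcomm, hcomm] at hab
  exact congrArg eX (hj' (eY.injective hab))

variable {P : Type*} [AddCommGroup P] [Module R P]

theorem exists_extension_of_eqOn_smul_top
    (hflat : Module.Flat (R ⧸ I) (M ⧸ (I • (⊤ : Submodule R M))))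
    {N : Submodule R P} (hN : I • ⊤ ≤ N)
    (η : P →ₗ[R] CharacterModule M) (ξ : N →ₗ[R] CharacterModule M)
    (hηξ : ∀ x (hx : x ∈ I • (⊤ : Submodule R P)), η x = ξ ⟨x, hN hx⟩) :
    ∃ η' : P →ₗ[R] CharacterModule M, η' ∘ₗ N.subtype = ξ := by
  let K := (I • ⊤ : Submodule R P).comap N.subtype
  let ζ := ξ - η ∘ₗ N.subtype
  have hK : K ≤ LinearMap.ker ζ := fun x hx => by
    simp [ζ, hηξ x hx]
  let j := K.mapQ (I • ⊤) N.subtype le_rfl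
  have hj : Function.Injective j := by
    rw [← LinearMap.ker_eq_bot, Submodule.ker_mapQ, Submodule.mkQ_map_self]
  have hX : Module.IsTorsionBySet R (N ⧸ K) I :=
    (Module.isTorsionBySet_quotient_iff _ _).mpr fun _ _ hr =>
      Submodule.smul_mem_smul hr Submodule.mem_top
  obtain ⟨Θ, hΘ⟩ := rTensor_injective_iff_lcomp_surjective.mp
    (rTensor_injective_of_isTorsionBySet I hflat hX
      (Module.isTorsionBySet_quotient_ideal_smul P I) hj) (K.liftQ ζ hK)
  refine ⟨η + Θ ∘ₗ (I • ⊤ : Submodule R P).mkQ, LinearMap.ext fun x => ?_⟩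
  have hΘx : Θ (Submodule.Quotient.mk x) = ξ x - η x := LinearMap.congr_fun hΘ (K.mkQ x)
  change η x + Θ (Submodule.Quotient.mk x) = ξ x
  rw [hΘx, add_sub_cancel]

theorem exists_extension_of_smul_top_le_finsupp
    (hflat : Module.Flat (R ⧸ I) (M ⧸ (I • (⊤ : Submodule R M))))
    (hinj : Function.Injective
      (lift ((LinearMap.lsmul R M).comp I.subtype) : I ⊗[R] M →ₗ[R] M))
    {S : Type*} {N : Submodule R (S →₀ R)} (hN : I • ⊤ ≤ N) (ξ : N →ₗ[R] CharacterModule M) :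
    ∃ η : (S →₀ R) →ₗ[R] CharacterModule M, η ∘ₗ N.subtype = ξ := by
  have hsingle : ∀ s, ∀ a ∈ I, Finsupp.single s a ∈ N := fun s a ha =>
    hN (by simpa using
      Submodule.smul_mem_smul ha (Submodule.mem_top (x := Finsupp.single s (1 : R))))
  choose g hg using fun s => exists_extension_of_lift_injective I hinj
    (ξ ∘ₗ ((Finsupp.lsingle s) ∘ₗ I.subtype).codRestrict N fun a => hsingle s a a.2)
  let η := Finsupp.lsum R g
  refine exists_extension_of_eqOn_smul_top I hflat hN η ξ fun x hx => ?_
  induction hx using Submodule.smul_induction_on' with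
  | smul r hr f _ =>
    have hmaps : η ∘ₗ (r • LinearMap.id) = ξ ∘ₗ (r • LinearMap.id).codRestrict N
        fun f => hN (Submodule.smul_mem_smul hr Submodule.mem_top) := by
      refine Finsupp.lhom_ext' fun s => LinearMap.ext_ring ?_
      change η (r • Finsupp.single s 1) = ξ ⟨r • Finsupp.single s 1, _⟩
      simp_rw [Finsupp.smul_single_one]
      exact (Finsupp.lsum_single R g s r).trans (LinearMap.congr_fun (hg s) ⟨r, hr⟩)
    exact LinearMap.congr_fun hmaps f
  | add x hx y hy hηx hηy =>
    rw [map_add, hηx, hηy, ← map_add]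
    rfl

theorem exists_extension_of_smul_top_le
    (hflat : Module.Flat (R ⧸ I) (M ⧸ (I • (⊤ : Submodule R M))))
    (hinj : Function.Injective
      (lift ((LinearMap.lsmul R M).comp I.subtype) : I ⊗[R] M →ₗ[R] M))
    {N : Submodule R P} (hN : I • ⊤ ≤ N) (ξ : N →ₗ[R] CharacterModule M) :
    ∃ η : P →ₗ[R] CharacterModule M, η ∘ₗ N.subtype = ξ := by
  let π := Finsupp.linearCombination R (id : P → P)
  have hπ : Function.Surjective π := Finsupp.linearCombination_id_surjective R P
  have hN' : I • ⊤ ≤ N.comap π := by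
    simpa using (Submodule.smul_comap_le_comap_smul π ⊤ I).trans (Submodule.comap_mono hN)
  obtain ⟨H, hH⟩ := exists_extension_of_smul_top_le_finsupp I hflat hinj hN'
    (ξ ∘ₗ π.restrict fun _ hx => hx)
  have hker : LinearMap.ker π ≤ LinearMap.ker H := fun x hx => by
    have hxN : x ∈ N.comap π := by simp [LinearMap.mem_ker.mp hx]
    rw [LinearMap.mem_ker, show H x = ξ ⟨π x, hxN⟩ from LinearMap.congr_fun hH ⟨x, hxN⟩]
    have h0 : (⟨π x, hxN⟩ : N) = 0 := Subtype.ext hx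
    rw [h0, map_zero]
  refine ⟨(LinearMap.ker π).liftQ H hker ∘ₗ (π.quotKerEquivOfSurjective hπ).symm,
    LinearMap.ext fun ⟨y, hy⟩ => ?_⟩
  obtain ⟨x, rfl⟩ := hπ y
  change (LinearMap.ker π).liftQ H hker ((π.quotKerEquivOfSurjective hπ).symm (π x)) = _
  rw [LinearMap.quotKerEquivOfSurjective_symm_apply]
  exact LinearMap.congr_fun hH ⟨x, hy⟩

theorem exists_extension_of_pow_smul_top_le
    (hflat : Module.Flat (R ⧸ I) (M ⧸ (I • (⊤ : Submodule R M))))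
    (hinj : Function.Injective
      (lift ((LinearMap.lsmul R M).comp I.subtype) : I ⊗[R] M →ₗ[R] M))
    (k : ℕ) {N : Submodule R P} (hN : I ^ k • ⊤ ≤ N) (ξ : N →ₗ[R] CharacterModule M) :
    ∃ η : P →ₗ[R] CharacterModule M, η ∘ₗ N.subtype = ξ := by
  induction k generalizing N with
  | zero =>
    have hN : ∀ x, x ∈ N := fun x => hN (by simp)
    exact ⟨ξ ∘ₗ LinearMap.id.codRestrict N hN, rfl⟩
  | succ k ih =>
    let N₁ := N ⊔ I ^ k • ⊤
    have hIN₁ : I • N₁ ≤ N := by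
      rw [Submodule.smul_sup, ← Submodule.mul_smul, ← pow_succ']
      exact sup_le Submodule.smul_le_right hN
    obtain ⟨ξ₁, hξ₁⟩ := exists_extension_of_smul_top_le I hflat hinj
      (N := N.comap N₁.subtype)
      (fun x hx => hIN₁ ((Submodule.mem_smul_top_iff I N₁ x).mp hx))
      (ξ ∘ₗ N₁.subtype.restrict fun _ hx => hx)
    obtain ⟨η, hη⟩ := ih le_sup_right ξ₁
    refine ⟨η, LinearMap.ext fun x => ?_⟩
    exact (LinearMap.congr_fun hη ⟨x, Submodule.mem_sup_left x.2⟩).trans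
      (LinearMap.congr_fun hξ₁ ⟨⟨x, Submodule.mem_sup_left x.2⟩, x.2⟩)

end

/-- If `I` is a nilpotent ideal of a commutative ring `R` and `M` an `R`-module
such that `M/IM` is flat over `R/I` and `I ⊗[R] M → IM ⊆ M` is injective, then `M` is flat. -/
theorem stmt_0 {R : Type*} [CommRing R] {M : Type*} [AddCommGroup M] [Module R M]
    (I : Ideal R) (hnil : ∃ n : ℕ, I ^ n = ⊥)
    (hflat : Module.Flat (R ⧸ I) (M ⧸ (I • (⊤ : Submodule R M))))
    (hinj : Function.Injective
      (TensorProduct.lift ((LinearMap.lsmul R M).comp I.subtype) :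
        I ⊗[R] M →ₗ[R] M)) :
    Module.Flat R M := by
  obtain ⟨n, hn⟩ := hnil
  rw [Module.Flat.iff_characterModule_baer]
  intro J g
  obtain ⟨η, hη⟩ := exists_extension_of_pow_smul_top_le I hflat hinj n (N := J) (by simp [hn]) g
  exact ⟨η, fun x hx => LinearMap.congr_fun hη ⟨x, hx⟩⟩
end

section
/- Let $f : R \to S$ be a faithfully flat homomorphism of commutative rings which is also an epimorphism in the category of commutative rings. Then $f$ is an isomorphism. -/
open TensorProduct

universe u

namespace Algebra

variable {R S : Type u} [CommRing R] [CommRing S] [Algebra R S]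

lemma isEpi_of_ringHom_comp_cancel
    (hepi : ∀ (T : Type u) [CommRing T] (g h : S →+* T),
        g.comp (algebraMap R S) = h.comp (algebraMap R S) → g = h) :
    Algebra.IsEpi R S :=
  CommRingCat.epi_iff_epi.mp
    ⟨fun g h e ↦ CommRingCat.hom_ext (hepi _ g.hom h.hom (congrArg CommRingCat.Hom.hom e))⟩

/-- `S → S ⊗[R] S, s ↦ s ⊗ 1` is the inverse of the multiplication map: `s ⊗ 1 = 1 ⊗ s`. -/
lemma IsEpi.bijective_algebraMap_tensorProduct [Algebra.IsEpi R S] :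
    Function.Bijective (algebraMap S (S ⊗[R] S)) := by
  convert (TensorProduct.lid' R S S).symm.bijective using 1
  funext s
  simp [Algebra.TensorProduct.algebraMap_apply, (isEpi_iff_forall_one_tmul_eq R S).mp]

/-- Faithfully flat descent of bijectivity along `R → S`, applied to `R → S` itself. -/
theorem IsEpi.bijective_algebraMap_of_faithfullyFlat [Module.FaithfullyFlat R S]
    [Algebra.IsEpi R S] : Function.Bijective (algebraMap R S) :=
  Module.FaithfullyFlat.bijective_of_tensorProduct bijective_algebraMap_tensorProduct

end Algebra

/-- A faithfully flat ring map which is an epimorphism of commutative rings is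
an isomorphism. -/
theorem stmt_5 {R S : Type u} [CommRing R] [CommRing S] [Algebra R S]
    [Module.Flat R S]
    (hfaith : ∀ (M : Type u) [AddCommGroup M] [Module R M],
        Nontrivial M → Nontrivial (S ⊗[R] M))
    (hepi : ∀ (T : Type u) [CommRing T] (g h : S →+* T),
        g.comp (algebraMap R S) = h.comp (algebraMap R S) → g = h) :
    Function.Bijective (algebraMap R S) := by
  have : Module.FaithfullyFlat R S :=
    (Module.FaithfullyFlat.iff_flat_and_lTensor_faithful R S).mpr ⟨inferInstance, hfaith⟩
  have : Algebra.IsEpi R S := Algebra.isEpi_of_ringHom_comp_cancel hepi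
  exact Algebra.IsEpi.bijective_algebraMap_of_faithfullyFlat
end

section
/- Let $k$ be a field, $R$ a commutative $k$-algebra acted on by a group $G$ by $k$-algebra automorphisms, and suppose there is a power $q$ such that $a^q \in R^G$ for every $a \in R$ (where $R^G$ is the invariant subalgebra). Then the map $\mathrm{Spec}\, R \to \mathrm{Spec}\, R^G$ induced by the inclusion $R^G \subseteq R$ is surjective, and two $G$-stable radical ideals $I, J$ of $R$ satisfy $I \subseteq J$ if and only if $I \cap R^G \subseteq J \cap R^G$. -/
/-- The subalgebra of `G`-invariants of a `k`-algebra `R` with `G` acting by `k`-algebra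
automorphisms. -/
def fixedSubalgebra (k : Type*) [CommSemiring k] (G : Type*) [Group G] (R : Type*)
    [CommRing R] [Algebra k R] [MulSemiringAction G R] [SMulCommClass G k R] :
    Subalgebra k R where
  carrier := {a | ∀ g : G, g • a = a}
  mul_mem' := fun ha hb g => by rw [smul_mul', ha g, hb g]
  add_mem' := fun ha hb g => by rw [smul_add, ha g, hb g]
  algebraMap_mem' := fun c g => by
    rw [Algebra.algebraMap_eq_smul_one, smul_comm, smul_one]

/-!
The inclusion `R^G → R` is injective and every element of `R` has a power in its image, so it
induces a homeomorphism on prime spectra. For the ideals: if `a ∈ I`, then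
`a ^ q ∈ I ∩ R^G ⊆ J`, and `J` is radical.
-/

theorem Ideal.le_of_comap_le_comap_of_exists_pow_mem_range {A R : Type*} [CommRing A]
    [CommRing R] (f : A →+* R) (H : ∀ x : R, ∃ n > 0, x ^ n ∈ f.range)
    {I J : Ideal R} (hJ : J.IsRadical) (h : I.comap f ≤ J.comap f) : I ≤ J := by
  intro x hx
  obtain ⟨n, hn, y, hy⟩ := H x
  have hyI : y ∈ I.comap f := by
    rw [Ideal.mem_comap, hy]
    exact I.pow_mem_of_mem hx n hn
  have hyJ : x ^ n ∈ J := hy ▸ h hyI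
  exact hJ ⟨n, hyJ⟩

theorem Ideal.comap_le_comap_iff_of_exists_pow_mem_range {A R : Type*} [CommRing A]
    [CommRing R] (f : A →+* R) (H : ∀ x : R, ∃ n > 0, x ^ n ∈ f.range)
    {I J : Ideal R} (hJ : J.IsRadical) : I.comap f ≤ J.comap f ↔ I ≤ J :=
  ⟨le_of_comap_le_comap_of_exists_pow_mem_range f H hJ, Ideal.comap_mono⟩

/-- If a group `G` acts on a commutative `k`-algebra `R` by `k`-algebra
automorphisms and there is a power `q` with `a^q ∈ R^G` for every `a ∈ R`, then
`Spec R → Spec R^G` is surjective, and `G`-stable radical ideals `I, J` of `R` satisfy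
`I ⊆ J` iff `I ∩ R^G ⊆ J ∩ R^G`. -/
theorem stmt_11 {k : Type*} [Field k] {G : Type*} [Group G] {R : Type*}
    [CommRing R] [Algebra k R] [MulSemiringAction G R] [SMulCommClass G k R]
    (q : ℕ) (hq : 0 < q) (hpow : ∀ a : R, a ^ q ∈ fixedSubalgebra k G R) :
    Function.Surjective
        (PrimeSpectrum.comap ((fixedSubalgebra k G R).val.toRingHom)) ∧
      ∀ I J : Ideal R, I.IsRadical → J.IsRadical →
        (∀ (g : G), ∀ a ∈ I, g • a ∈ I) → (∀ (g : G), ∀ a ∈ J, g • a ∈ J) →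
        (I ≤ J ↔
          Ideal.comap ((fixedSubalgebra k G R).val.toRingHom) I ≤
            Ideal.comap ((fixedSubalgebra k G R).val.toRingHom) J) := by
  set f := (fixedSubalgebra k G R).val.toRingHom
  have H : ∀ x : R, ∃ n > 0, x ^ n ∈ f.range := fun x => ⟨q, hq, ⟨x ^ q, hpow x⟩, rfl⟩
  have hker : RingHom.ker f ≤ nilradical _ := by
    rw [(RingHom.injective_iff_ker_eq_bot f).mp Subtype.val_injective]
    exact bot_le
  exact ⟨(PrimeSpectrum.isHomeomorph_comap f H hker).surjective, fun I J _ hJ _ _ =>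
    (Ideal.comap_le_comap_iff_of_exists_pow_mem_range f H hJ).symm⟩
end

section
/- Let $k$ be a field of characteristic $p > 2$ and $L(p-1)$ the $p$-dimensional irreducible representation of $SL_2$ of highest weight $p-1$. Then the surjection $L(p-1) \otimes L(p-1) \to k$ (dual to the coevaluation, using self-duality of $L(p-1)$) has the property that its induced map $\mathrm{Sym}^p(L(p-1) \otimes L(p-1)) \to k$ admits an $SL_2$-equivariant splitting $k \to \mathrm{Sym}^p(L(p-1) \otimes L(p-1))$. -/
open MvPolynomial TensorProduct

noncomputable section

/-- The group `SL₂(k)`. -/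
abbrev SL2 (k : Type*) [CommRing k] := Matrix.SpecialLinearGroup (Fin 2) k

variable (k : Type*) [Field k]

variable {V : Type*} [AddCommGroup V] [Module k V]

/-- A representation of the abstract group `SL₂(k)` is rational (equivalently polynomial,
since `det = 1`) if its matrix coefficients in some basis are polynomial functions of the
matrix entries. -/
def IsRationalRep (ρ : Representation k (SL2 k) V) : Prop :=
  ∃ (n : ℕ) (b : Module.Basis (Fin n) k V) (P : Fin n → Fin n → MvPolynomial (Fin 2 × Fin 2) k),
    ∀ (g : SL2 k) (i j : Fin n),
      b.repr (ρ g (b j)) i =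
        eval (fun q : Fin 2 × Fin 2 => (g : Matrix (Fin 2) (Fin 2) k) q.1 q.2) (P i j)

/-- A submodule is a subrepresentation if it is stable under the group action. -/
def IsSubrep (ρ : Representation k (SL2 k) V) (q : Submodule k V) : Prop :=
  ∀ g : SL2 k, ∀ v ∈ q, ρ g v ∈ q

/-- Irreducibility of a representation. -/
def IsIrreducibleRep (ρ : Representation k (SL2 k) V) : Prop :=
  Nontrivial V ∧ ∀ q : Submodule k V, IsSubrep k ρ q → q = ⊥ ∨ q = ⊤

/-- The diagonal torus element `diag(t, t⁻¹)` of `SL₂(k)`. -/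
def diagT (t : kˣ) : SL2 k :=
  ⟨!![(t : k), 0; 0, ((t⁻¹ : kˣ) : k)], by
    simp [Matrix.det_fin_two_of, Units.mul_inv]⟩

/-- The weight space of weight `n ∈ ℤ` with respect to the diagonal torus. -/
def weightSpace (ρ : Representation k (SL2 k) V) (n : ℤ) : Submodule k V where
  carrier := {v | ∀ t : kˣ, ρ (diagT k t) v = ((t ^ n : kˣ) : k) • v}
  zero_mem' := by intro t; simp
  add_mem' := by intro a b ha hb t; rw [map_add, ha t, hb t, smul_add]
  smul_mem' := by intro c v hv t; rw [map_smul, hv t, smul_comm]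

/-- A representation has highest weight `a` if `a` is a weight and no larger integer is. -/
def HasHighestWeight (ρ : Representation k (SL2 k) V) (a : ℤ) : Prop :=
  weightSpace k ρ a ≠ ⊥ ∧ ∀ m : ℤ, a < m → weightSpace k ρ m = ⊥

variable {p : ℕ}

/-- The induced action of `g ∈ SL₂(k)` on the symmetric algebra
`Sym(V ⊗ V) = k[zᵢⱼ]`, where the variable `X (i,j)` corresponds to the basis vector
`b i ⊗ b j` of `V ⊗ V`. -/
def symAct (ρ : Representation k (SL2 k) V) (b : Module.Basis (Fin p) k V) (g : SL2 k) :
    MvPolynomial (Fin p × Fin p) k →ₐ[k] MvPolynomial (Fin p × Fin p) k :=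
  aeval (fun ij : Fin p × Fin p =>
    ∑ i' : Fin p, ∑ j' : Fin p,
      C (b.repr (ρ g (b ij.1)) i' * b.repr (ρ g (b ij.2)) j') * X (i', j'))

/-- The algebra map `Sym(V ⊗ V) → k` induced by a linear functional `φ : V ⊗ V → k`;
its restriction to the degree-`n` part is `Symⁿ φ`. -/
def symOfPairing (φ : V ⊗[k] V →ₗ[k] k) (b : Module.Basis (Fin p) k V) :
    MvPolynomial (Fin p × Fin p) k →ₐ[k] k :=
  aeval (fun ij : Fin p × Fin p => φ (b ij.1 ⊗ₜ[k] b ij.2))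

/-! The invariant is `det Z / det M`, where `Z = (X (i, j))` is the generic matrix and `M` the
Gram matrix of `φ` in the basis `b`. Substituting `g` turns `Z` into `AᵀZA` with `A` the matrix of
`ρ g`, so `det Z` picks up the factor `det(ρ g)²`, while `Sym φ` evaluates `Z` to `M`.
Irreducibility makes the invariant pairing nondegenerate, so `det M ≠ 0`, and taking determinants
in `AᵀMA = M` gives `det(ρ g)² = 1`. -/

open Matrix

variable {k}

def pairingForm (φ : V ⊗[k] V →ₗ[k] k) : LinearMap.BilinForm k V :=
  (TensorProduct.mk k V V).compr₂ φ

section InvariantForm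

variable {ρ : Representation k (SL2 k) V} {B : LinearMap.BilinForm k V}

theorem pairingForm_comp_eq_of_invariant {φ : V ⊗[k] V →ₗ[k] k} {g : SL2 k}
    (hφ : φ ∘ₗ TensorProduct.map (ρ g) (ρ g) = φ) :
    (pairingForm φ).comp (ρ g) (ρ g) = pairingForm φ := by
  ext x y
  simpa [pairingForm] using LinearMap.congr_fun hφ (x ⊗ₜ y)

theorem pairingForm_ne_zero_of_surjective {φ : V ⊗[k] V →ₗ[k] k}
    (hφ : Function.Surjective φ) : pairingForm φ ≠ 0 := by
  intro h
  have hφ0 : φ = 0 := TensorProduct.ext' fun x y => LinearMap.congr_fun₂ h x y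
  obtain ⟨t, ht⟩ := hφ 1
  simp [hφ0] at ht

theorem isSubrep_ker_of_comp_eq (hB : ∀ g, B.comp (ρ g) (ρ g) = B) :
    IsSubrep k ρ (LinearMap.ker B) := by
  intro g u hu
  ext x
  have hx : ρ g (ρ g⁻¹ x) = x := by simp [← Module.End.mul_apply, ← map_mul]
  rw [LinearMap.mem_ker] at hu
  rw [← hx, ← LinearMap.BilinForm.comp_apply, hB g, hu, LinearMap.zero_apply,
    LinearMap.zero_apply]

theorem ker_eq_bot_of_isIrreducibleRep (hirr : IsIrreducibleRep k ρ) (hB0 : B ≠ 0)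
    (hB : ∀ g, B.comp (ρ g) (ρ g) = B) : LinearMap.ker B = ⊥ :=
  (hirr.2 _ (isSubrep_ker_of_comp_eq hB)).resolve_right fun htop =>
    hB0 (LinearMap.ker_eq_top.1 htop)

theorem det_sq_eq_one_of_comp_eq {ι : Type*} [Fintype ι] [DecidableEq ι]
    (b : Module.Basis ι k V) (hB : (LinearMap.BilinForm.toMatrix b B).det ≠ 0) {f : V →ₗ[k] V}
    (hf : B.comp f f = B) : LinearMap.det f ^ 2 = 1 := by
  have h := congrArg det (LinearMap.BilinForm.toMatrix_comp b b B f f)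
  rw [hf, det_mul, det_mul, det_transpose, LinearMap.det_toMatrix] at h
  exact mul_right_cancel₀ hB (by linear_combination -h)

end InvariantForm

theorem isHomogeneous_det_mvPolynomialX (n R : Type*) [Fintype n] [DecidableEq n]
    [CommRing R] : (mvPolynomialX n n R).det.IsHomogeneous (Fintype.card n) := by
  rw [det_apply]
  refine IsHomogeneous.sum _ _ _ fun σ _ => ?_
  rw [← mem_homogeneousSubmodule, Units.smul_def]
  refine zsmul_mem ?_ _
  rw [mem_homogeneousSubmodule]
  simpa using IsHomogeneous.prod Finset.univ (fun i => mvPolynomialX n n R (σ i) i) (fun _ => 1)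
    fun i _ => isHomogeneous_X R (σ i, i)

section SymmetricAlgebra

variable (ρ : Representation k (SL2 k) V) (b : Module.Basis (Fin p) k V)

theorem mvPolynomialX_map_symAct (g : SL2 k) :
    (mvPolynomialX (Fin p) (Fin p) k).map (symAct k ρ b g) =
      ((LinearMap.toMatrix b b (ρ g)).map C)ᵀ * mvPolynomialX (Fin p) (Fin p) k *
        (LinearMap.toMatrix b b (ρ g)).map C := by
  refine Matrix.ext fun i j => ?_
  simp only [map_apply, mvPolynomialX_apply, symAct, aeval_X, mul_apply, transpose_apply,
    Finset.sum_mul, LinearMap.toMatrix_apply, map_mul]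
  rw [Finset.sum_comm]
  refine Finset.sum_congr rfl fun x _ => Finset.sum_congr rfl fun y _ => ?_
  ring

theorem symAct_det_mvPolynomialX (g : SL2 k) :
    symAct k ρ b g (mvPolynomialX (Fin p) (Fin p) k).det =
      C (LinearMap.det (ρ g) ^ 2) * (mvPolynomialX (Fin p) (Fin p) k).det := by
  rw [AlgHom.map_det, AlgHom.mapMatrix_apply, mvPolynomialX_map_symAct, det_mul, det_mul,
    det_transpose, ← RingHom.mapMatrix_apply, ← RingHom.map_det, LinearMap.det_toMatrix, map_pow]
  ring

theorem symOfPairing_det_mvPolynomialX (φ : V ⊗[k] V →ₗ[k] k) :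
    symOfPairing k φ b (mvPolynomialX (Fin p) (Fin p) k).det =
      (LinearMap.BilinForm.toMatrix b (pairingForm φ)).det := by
  rw [AlgHom.map_det]
  congr 1
  ext i j
  simp [symOfPairing, LinearMap.BilinForm.toMatrix_apply, pairingForm]

end SymmetricAlgebra

theorem stmt_14_general {k : Type*} [Field k] {p : ℕ}
    {V : Type*} [AddCommGroup V] [Module k V]
    (ρ : Representation k (SL2 k) V)
    (hirr : IsIrreducibleRep k ρ)
    (φ : V ⊗[k] V →ₗ[k] k)
    (hsurj : Function.Surjective φ)
    (hequiv : ∀ g : SL2 k, φ ∘ₗ (TensorProduct.map (ρ g) (ρ g)) = φ)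
    (b : Module.Basis (Fin p) k V) :
    ∃ w : MvPolynomial (Fin p × Fin p) k,
      w.IsHomogeneous p ∧ (∀ g : SL2 k, symAct k ρ b g w = w) ∧
        symOfPairing k φ b w = 1 := by
  have hinv g := pairingForm_comp_eq_of_invariant (hequiv g)
  have hker := ker_eq_bot_of_isIrreducibleRep hirr (pairingForm_ne_zero_of_surjective hsurj) hinv
  have hdet : (LinearMap.BilinForm.toMatrix b (pairingForm φ)).det ≠ 0 := by
    rwa [← Matrix.separatingLeft_iff_det_ne_zero,
      LinearMap.BilinForm.separatingLeft_toMatrix_iff, LinearMap.separatingLeft_iff_ker_eq_bot]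
  refine ⟨C (LinearMap.BilinForm.toMatrix b (pairingForm φ)).det⁻¹ *
    (mvPolynomialX (Fin p) (Fin p) k).det, ?_, fun g => ?_, ?_⟩
  · simpa using (isHomogeneous_det_mvPolynomialX (Fin p) k).C_mul _
  · rw [map_mul, symAct_det_mvPolynomialX, det_sq_eq_one_of_comp_eq b hdet (hinv g), map_one,
      one_mul, ← algebraMap_eq, AlgHom.commutes]
  · rw [map_mul, symOfPairing_det_mvPolynomialX, ← algebraMap_eq, AlgHom.commutes,
      Algebra.algebraMap_self_apply, inv_mul_cancel₀ hdet]

/-- Let `k` have characteristic `p > 2` and let `V = L(p-1)` be the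
`p`-dimensional irreducible (rational) representation of `SL₂` of highest weight `p-1`
(the Steinberg module).  Let `φ : V ⊗ V → k` be the `SL₂`-equivariant surjection dual to the
coevaluation (an invariant pairing realizing the self-duality of `V`).  Then the induced map
`Sym^p(V ⊗ V) → k` admits an `SL₂`-equivariant splitting: there is an invariant element `w`
of degree `p` in `Sym(V ⊗ V)` with `(Sym^p φ) w = 1`. -/
theorem stmt_14 {k : Type*} [Field k] {p : ℕ} [Fact p.Prime] [CharP k p] (hp2 : 2 < p)
    {V : Type*} [AddCommGroup V] [Module k V] [FiniteDimensional k V]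
    (hdim : Module.finrank k V = p)
    (ρ : Representation k (SL2 k) V)
    (hrat : IsRationalRep k ρ)
    (hirr : IsIrreducibleRep k ρ)
    (hhw : HasHighestWeight k ρ ((p : ℤ) - 1))
    (φ : V ⊗[k] V →ₗ[k] k)
    (hsurj : Function.Surjective φ)
    (hequiv : ∀ g : SL2 k, φ ∘ₗ (TensorProduct.map (ρ g) (ρ g)) = φ)
    (b : Module.Basis (Fin p) k V) :
    ∃ w : MvPolynomial (Fin p × Fin p) k,
      w.IsHomogeneous p ∧ (∀ g : SL2 k, symAct k ρ b g w = w) ∧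
        symOfPairing k φ b w = 1 :=
  stmt_14_general ρ hirr φ hsurj hequiv b
end
end

section
/- Let $k$ be a field and $H \leq G$ affine group schemes over $k$. If every finite-dimensional representation of $H$ embeds into the restriction to $H$ of a finite-dimensional representation of $G$, then $H$ is an intersection of stabilizer subgroups $G_v$ of vectors $v$ in finite-dimensional $G$-representations. -/
open TensorProduct

universe u

/-- A finite-dimensional right comodule over a Hopf algebra `A` over a field `k`,
i.e. a finite-dimensional representation of the affine group scheme `Spec A`. -/
structure FdComod (k A : Type u) [Field k] [CommRing A] [HopfAlgebra k A] where
  V : Type u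
  [isAddCommGroup : AddCommGroup V]
  [isModule : Module k V]
  [isFinite : FiniteDimensional k V]
  coaction : V →ₗ[k] V ⊗[k] A
  counit_coaction : ∀ v : V,
    (LinearMap.lTensor V (Coalgebra.counit (R := k))) (coaction v) = v ⊗ₜ[k] (1 : k)
  coassoc : (TensorProduct.assoc k V A A).toLinearMap ∘ₗ
      (LinearMap.rTensor A coaction) ∘ₗ coaction =
    (LinearMap.lTensor V (Coalgebra.comul (R := k))) ∘ₗ coaction

attribute [instance] FdComod.isAddCommGroup FdComod.isModule FdComod.isFinite

/-!
For each `b ∈ ker π` we build a vector fixed by `H` such that every point `g` fixing it has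
`g b = 0`. Conversely a point killing `ker π` factors through `π`, hence fixes every `H`-fixed
vector, so these vectors cut out `H`.

By local finiteness `b` lies in a finite-dimensional subcomodule `W` of the
regular comodule `𝒪(G)`. Its image `π(W) ⊆ 𝒪(H)` is an `H`-comodule, which by hypothesis embeds
into a `G`-comodule `M`; so `φ : W → π(W) → M` is `H`-equivariant with kernel `W ∩ ker π`.
As a vector of the `G`-comodule `Hom(W, M)` — in bases, the comodule of the multiplicative
matrix `S(A)ᵀ ⊗ₖ P` built from the coefficient matrices `A` of `W` and `P` of `M` — `φ` is fixed
by `H`, and any point `g` fixing it makes `φ` `g`-equivariant. Since `ker φ ⊆ ker ε`, the counit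
factors as `θ ∘ φ` on `W`, and applying `θ ⊗ g` to the equivariance at `b` gives
`g b = (ε ⊗ g)(Δ b) = 0`.
-/

open Coalgebra (comul counit)
open HopfAlgebra (antipode)
open scoped Matrix Kronecker

section TensorProduct

open TensorProduct LinearMap

variable {R M N P Q : Type*} [CommSemiring R] [AddCommMonoid M] [AddCommMonoid N]
  [AddCommMonoid P] [AddCommMonoid Q] [Module R M] [Module R N] [Module R P] [Module R Q]

theorem LinearMap.rTensor_lTensor_comm_apply (f : M →ₗ[R] P) (g : N →ₗ[R] Q) (t : M ⊗[R] N) :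
    f.rTensor Q (g.lTensor M t) = g.lTensor P (f.rTensor N t) := by
  rw [← comp_apply, ← comp_apply, rTensor_comp_lTensor, lTensor_comp_rTensor]

theorem LinearMap.lTensor_mem_range_rTensor (g : N →ₗ[R] M) (f : P →ₗ[R] Q) {t : M ⊗[R] P}
    (ht : t ∈ range (g.rTensor P)) : f.lTensor M t ∈ range (g.rTensor Q) := by
  obtain ⟨s, rfl⟩ := ht
  exact ⟨f.lTensor N s, rTensor_lTensor_comm_apply _ _ _⟩

variable {ι κ : Type*} [DecidableEq ι] [DecidableEq κ]
  (ℬ : Module.Basis ι R M) (ℬ' : Module.Basis κ R N)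

theorem TensorProduct.equivFinsuppOfBasisLeft_lTensor (g : P →ₗ[R] Q) (t : M ⊗[R] P) (i : ι) :
    equivFinsuppOfBasisLeft ℬ (g.lTensor M t) i = g (equivFinsuppOfBasisLeft ℬ t i) := by
  induction t with
  | zero => simp
  | add a b ha hb => simp [ha, hb]
  | tmul m n => simp

theorem TensorProduct.equivFinsuppOfBasisLeft_rTensor [Fintype ι] [Fintype κ] (φ : M →ₗ[R] N)
    (t : M ⊗[R] P) (i : κ) :
    equivFinsuppOfBasisLeft ℬ' (φ.rTensor P t) i =
      ∑ l, toMatrix ℬ ℬ' φ i l • equivFinsuppOfBasisLeft ℬ t l := by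
  induction t with
  | zero => simp
  | add a b ha hb => simp [ha, hb, Finset.sum_add_distrib]
  | tmul m n =>
    simp only [rTensor_tmul, equivFinsuppOfBasisLeft_apply_tmul_apply, smul_smul,
      ← Finset.sum_smul, ← toMatrix_mulVec_repr ℬ ℬ' φ m]
    rfl

theorem TensorProduct.sum_basis_tmul_equivFinsuppOfBasisLeft [Fintype ι] (t : M ⊗[R] P) :
    ∑ i, ℬ i ⊗ₜ[R] equivFinsuppOfBasisLeft ℬ t i = t := by
  conv_rhs => rw [← (equivFinsuppOfBasisLeft ℬ).symm_apply_apply t]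
  rw [equivFinsuppOfBasisLeft_symm_apply, Finsupp.sum_fintype _ _ (by simp)]

theorem TensorProduct.equivFinsuppOfBasisRight_rTensor (g : P →ₗ[R] Q) (t : P ⊗[R] M) (i : ι) :
    equivFinsuppOfBasisRight ℬ (g.rTensor M t) i = g (equivFinsuppOfBasisRight ℬ t i) := by
  induction t with
  | zero => simp
  | add a b ha hb => simp [ha, hb]
  | tmul m n => simp

theorem TensorProduct.equivFinsuppOfBasisRight_assoc_symm (t : P ⊗[R] (Q ⊗[R] M)) (i : ι) :
    equivFinsuppOfBasisRight ℬ ((TensorProduct.assoc R P Q M).symm t) i =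
      (Finsupp.lapply i ∘ₗ (equivFinsuppOfBasisRight ℬ).toLinearMap).lTensor P t := by
  induction t with
  | zero => simp
  | add a b ha hb => simp [ha, hb]
  | tmul n u =>
    induction u with
    | zero => simp
    | add u u' hu hu' => simp [tmul_add, hu, hu']
    | tmul x y => simp [tmul_smul]

end TensorProduct

theorem Module.Dual.exists_comp_eq_of_ker_le {K V M : Type*} [Field K] [AddCommGroup V]
    [Module K V] [AddCommGroup M] [Module K M] (f : V →ₗ[K] M) (ξ : Module.Dual K V)
    (h : LinearMap.ker f ≤ LinearMap.ker ξ) : ∃ θ : Module.Dual K M, θ ∘ₗ f = ξ := by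
  have hξ : ξ ∈ LinearMap.range f.dualMap := by
    rw [LinearMap.range_dualMap_eq_dualAnnihilator_ker]
    exact (Submodule.mem_dualAnnihilator ξ).mpr fun _ hw => h hw
  exact hξ

theorem Matrix.mul_mul_eq_iff_mul_eq_mul {R ι κ : Type*} [Semiring R] [Fintype ι]
    [DecidableEq ι] [Fintype κ] {X Y : Matrix ι ι R} (hXY : X * Y = 1) (hYX : Y * X = 1)
    (M : Matrix κ κ R) (Φ : Matrix κ ι R) : M * Φ * X = Φ ↔ M * Φ = Φ * Y := by
  constructor <;> intro h
  · conv_rhs => rw [← h]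
    rw [Matrix.mul_assoc _ X, hXY, Matrix.mul_one]
  · rw [h, Matrix.mul_assoc, hYX, Matrix.mul_one]

section LocalFiniteness

open TensorProduct LinearMap

variable {k A : Type*} [Field k] [AddCommGroup A] [Module k A] [Coalgebra k A]

/- `Δ b = ∑ cᵢ ⊗ eᵢ` in a basis `e`; coassociativity writes each `Δ cᵢ` in terms of the `cⱼ` on
the left, so the span of the `cᵢ` works. -/
theorem exists_finiteDimensional_comul_mem_range (b : A) :
    ∃ W : Submodule k A, b ∈ W ∧ FiniteDimensional k W ∧
      ∀ w ∈ W, comul (R := k) w ∈ range (W.subtype.rTensor A) := by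
  classical
  let e := Module.Basis.ofVectorSpace k A
  let c := equivFinsuppOfBasisRight e (comul (R := k) b)
  let W := Submodule.span k (Set.range fun i : c.support => c i)
  have hc : ∀ i, c i ∈ W := by
    intro i
    by_cases hi : i ∈ c.support
    · exact Submodule.subset_span ⟨⟨i, hi⟩, rfl⟩
    · simp [Finsupp.notMem_support_iff.mp hi]
  have hcomul : comul (R := k) b = ∑ i ∈ c.support, c i ⊗ₜ e i := by
    rw [← (equivFinsuppOfBasisRight e).symm_apply_apply (comul b),
      equivFinsuppOfBasisRight_symm_apply]
    rfl
  have hb : comul (R := k) b ∈ range (W.subtype.rTensor A) := by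
    rw [hcomul]
    exact Submodule.sum_mem _ fun i _ => ⟨⟨c i, hc i⟩ ⊗ₜ e i, rfl⟩
  refine ⟨W, ?_, FiniteDimensional.span_of_finite k (Set.finite_range _), ?_⟩
  · have h := congrArg (TensorProduct.rid k A) (Coalgebra.lTensor_counit_comul (R := k) b)
    rw [hcomul, rid_tmul, one_smul] at h
    simp only [map_sum, lTensor_tmul, rid_tmul] at h
    rw [← h]
    exact Submodule.sum_mem _ fun i _ => W.smul_mem _ (hc i)
  · have hgen : ∀ i, comul (R := k) (c i) ∈ range (W.subtype.rTensor A) := by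
      intro i
      rw [← equivFinsuppOfBasisRight_rTensor, ← Coalgebra.coassoc_symm_apply,
        equivFinsuppOfBasisRight_assoc_symm]
      exact lTensor_mem_range_rTensor _ _ (lTensor_mem_range_rTensor _ _ hb)
    have hle : W ≤ (range (W.subtype.rTensor A)).comap comul :=
      Submodule.span_le.mpr fun _ ⟨i, hi⟩ => hi ▸ hgen i
    exact fun w hw => hle hw

end LocalFiniteness

namespace Submodule

open TensorProduct LinearMap

theorem rTensor_subtype_injective {k M : Type*} [Field k] [AddCommGroup M] [Module k M]
    (W : Submodule k M) (N : Type*) [AddCommGroup N] [Module k N] :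
    Function.Injective (W.subtype.rTensor N) :=
  Module.Flat.rTensor_preserves_injective_linearMap _ W.injective_subtype

section Coalgebra

variable {k A C : Type*} [Field k] [AddCommGroup A] [Module k A] [Coalgebra k A]
  [AddCommGroup C] [Module k C] [Coalgebra k C] {W : Submodule k A}
  (hW : ∀ w ∈ W, comul (R := k) w ∈ range (W.subtype.rTensor A))

noncomputable def restrictComul : W →ₗ[k] W ⊗[k] A :=
  (LinearEquiv.ofInjective _ (W.rTensor_subtype_injective A)).symm ∘ₗ
    (comul ∘ₗ W.subtype).codRestrict _ fun w => hW w w.2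

theorem rTensor_subtype_comp_restrictComul :
    W.subtype.rTensor A ∘ₗ restrictComul hW = comul ∘ₗ W.subtype := by
  ext w
  simp only [restrictComul, coe_comp, LinearEquiv.coe_coe, Function.comp_apply,
    LinearEquiv.ofInjective_symm_apply, coe_subtype]
  rfl

theorem rTensor_subtype_restrictComul (w : W) :
    W.subtype.rTensor A (restrictComul hW w) = comul (w : A) :=
  LinearMap.congr_fun (rTensor_subtype_comp_restrictComul hW) w

theorem rTensor_counit_lTensor_restrictComul {R : Type*} [AddCommGroup R] [Module k R]
    (g : A →ₗ[k] R) (w : W) :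
    (counit ∘ₗ W.subtype).rTensor R (g.lTensor W (restrictComul hW w)) = 1 ⊗ₜ g w := by
  rw [rTensor_lTensor_comm_apply, rTensor_comp_apply, rTensor_subtype_restrictComul,
    Coalgebra.rTensor_counit_comul, lTensor_tmul]

include hW in
theorem comul_mem_range_rTensor_map (π : A →ₗc[k] C) :
    ∀ q ∈ W.map π.toLinearMap,
      comul (R := k) q ∈ range ((W.map π.toLinearMap).subtype.rTensor C) := by
  rintro _ ⟨w, hw, rfl⟩
  obtain ⟨t, ht⟩ := hW w hw
  have h : (W.map π.toLinearMap).subtype.rTensor C ∘ₗ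
      TensorProduct.map (π.toLinearMap.submoduleMap W) π.toLinearMap =
        TensorProduct.map π.toLinearMap π.toLinearMap ∘ₗ W.subtype.rTensor A :=
    TensorProduct.ext' fun _ _ => rfl
  refine ⟨TensorProduct.map (π.toLinearMap.submoduleMap W) π.toLinearMap t, ?_⟩
  rw [← comp_apply, h, comp_apply, ht]
  exact CoalgHomClass.map_comp_comul_apply π w

theorem restrictComul_map (π : A →ₗc[k] C) (w : W) :
    restrictComul (comul_mem_range_rTensor_map hW π) (π.toLinearMap.submoduleMap W w) =
      (π.toLinearMap.submoduleMap W).rTensor C (π.toLinearMap.lTensor W (restrictComul hW w)) := by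
  apply (W.map π.toLinearMap).rTensor_subtype_injective C
  have h : ∀ t, (W.map π.toLinearMap).subtype.rTensor C
      ((π.toLinearMap.submoduleMap W).rTensor C (π.toLinearMap.lTensor W t)) =
        TensorProduct.map π.toLinearMap π.toLinearMap (W.subtype.rTensor A t) := by
    intro t
    induction t with
    | zero => simp only [map_zero]
    | add t t' ht ht' => simp only [map_add, ht, ht']
    | tmul => rfl
  rw [rTensor_subtype_restrictComul, h, rTensor_subtype_restrictComul]
  exact (CoalgHomClass.map_comp_comul_apply π (w : A)).symm

end Coalgebra

variable {k A : Type u} [Field k] [CommRing A] [HopfAlgebra k A] {W : Submodule k A}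
  (hW : ∀ w ∈ W, comul (R := k) w ∈ range (W.subtype.rTensor A))

-- An `abbrev`, so that the instances on `(toFdComod hW).V` unify with those of `W`.
noncomputable abbrev toFdComod [FiniteDimensional k W] : FdComod k A where
  V := W
  coaction := restrictComul hW
  counit_coaction w := W.rTensor_subtype_injective k <| by
    simp [rTensor_lTensor_comm_apply, rTensor_subtype_restrictComul]
  coassoc := by
    ext w
    apply W.rTensor_subtype_injective (A ⊗[k] A)
    simp only [comp_apply, LinearEquiv.coe_coe]
    rw [rTensor_lTensor_comm_apply, rTensor_subtype_restrictComul, rTensor_tensor]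
    simp only [comp_apply, LinearEquiv.coe_coe, LinearEquiv.symm_apply_apply,
      ← rTensor_comp_apply, rTensor_subtype_comp_restrictComul]
    simp [rTensor_comp_apply, rTensor_subtype_restrictComul]

end Submodule

section MultiplicativeMatrix

variable (k : Type*) {B : Type*} [CommRing k] [CommRing B] [HopfAlgebra k B]
  {ι : Type*} [Fintype ι] [DecidableEq ι]

structure IsMultiplicativeMatrix (A : Matrix ι ι B) : Prop where
  comul_apply : ∀ i j, comul (R := k) (A i j) = ∑ l, A i l ⊗ₜ[k] A l j
  counit_apply : ∀ i j, counit (R := k) (A i j) = (1 : Matrix ι ι k) i j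

variable {k}

namespace IsMultiplicativeMatrix

variable {A : Matrix ι ι B} (hA : IsMultiplicativeMatrix k A)
include hA

theorem antipode_mul : A.map (antipode k) * A = 1 := by
  ext i j
  have h := HopfAlgebra.mul_antipode_rTensor_comul_apply (R := k) (A i j)
  simp only [hA.comul_apply, hA.counit_apply, map_sum, LinearMap.rTensor_tmul,
    LinearMap.mul'_apply] at h
  simp only [Matrix.mul_apply, Matrix.map_apply, h, Matrix.one_apply]
  split_ifs <;> simp

theorem mul_antipode : A * A.map (antipode k) = 1 := by
  ext i j
  have h := HopfAlgebra.mul_antipode_lTensor_comul_apply (R := k) (A i j)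
  simp only [hA.comul_apply, hA.counit_apply, map_sum, LinearMap.lTensor_tmul,
    LinearMap.mul'_apply] at h
  simp only [Matrix.mul_apply, Matrix.map_apply, h, Matrix.one_apply]
  split_ifs <;> simp

/- `Δ A = A₁ A₂` with `A₁ = A ⊗ 1`, `A₂ = 1 ⊗ A`, and `S A = A⁻¹`; since `Δ` is multiplicative,
`Δ (S A) = (Δ A)⁻¹ = A₂⁻¹ A₁⁻¹`. -/
open Algebra.TensorProduct in
theorem comul_antipode_apply (i j : ι) :
    comul (R := k) (antipode k (A i j)) = ∑ l, antipode k (A l j) ⊗ₜ[k] antipode k (A i l) := by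
  let Δ := Bialgebra.comulAlgHom k B
  let L : B →ₐ[k] B ⊗[k] B := includeLeft
  let R : B →ₐ[k] B ⊗[k] B := includeRight
  have hΔ : A.map Δ = A.map L * A.map R := by
    ext i j
    simp [Δ, L, R, Matrix.mul_apply, hA.comul_apply]
  have hinv : (A.map (antipode k)).map Δ =
      (A.map (antipode k)).map R * (A.map (antipode k)).map L := by
    refine left_inv_eq_right_inv (a := A.map Δ) ?_ ?_
    · rw [← Matrix.map_mul, hA.antipode_mul, Matrix.map_one _ (map_zero Δ) (map_one Δ)]
    · rw [hΔ, mul_assoc, ← mul_assoc (A.map R), ← Matrix.map_mul, hA.mul_antipode,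
        Matrix.map_one _ (map_zero _) (map_one _), one_mul, ← Matrix.map_mul, hA.mul_antipode,
        Matrix.map_one _ (map_zero _) (map_one _)]
  simpa [Δ, L, R, Matrix.mul_apply] using congrFun (congrFun hinv i) j

theorem transpose_antipode : IsMultiplicativeMatrix k (A.map (antipode k))ᵀ where
  comul_apply i j := by simp [hA.comul_antipode_apply]
  counit_apply i j := by simp [hA.counit_apply, Matrix.one_apply, eq_comm]

theorem kronecker {κ : Type*} [Fintype κ] [DecidableEq κ] {P : Matrix κ κ B}
    (hP : IsMultiplicativeMatrix k P) : IsMultiplicativeMatrix k (A ⊗ₖ P) where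
  comul_apply i j := by
    simp [Bialgebra.comul_mul, hA.comul_apply, hP.comul_apply, Finset.sum_mul_sum,
      Fintype.sum_prod_type]
  counit_apply i j := by
    simp only [Matrix.kroneckerMap_apply, Bialgebra.counit_mul, hA.counit_apply,
      hP.counit_apply, Matrix.one_apply, Prod.ext_iff]
    split_ifs <;> simp_all

end IsMultiplicativeMatrix

end MultiplicativeMatrix

namespace FdComod

open TensorProduct

variable {k B : Type u} [Field k] [CommRing B] [HopfAlgebra k B] {ι : Type u} [Fintype ι]
  [DecidableEq ι] {R : Type*} [CommRing R] [Algebra k R]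

section Coordinates

variable (V : FdComod k B) (ℬ : Module.Basis ι k V.V)

omit [Fintype ι] in
noncomputable def coeffMatrix : Matrix ι ι B :=
  fun i j => equivFinsuppOfBasisLeft ℬ (V.coaction (ℬ j)) i

theorem coaction_basis (j : ι) : V.coaction (ℬ j) = ∑ i, ℬ i ⊗ₜ[k] V.coeffMatrix ℬ i j :=
  (sum_basis_tmul_equivFinsuppOfBasisLeft ℬ _).symm

theorem equivFinsuppOfBasisLeft_coaction (v : V.V) (i : ι) :
    equivFinsuppOfBasisLeft ℬ (V.coaction v) i = ∑ j, ℬ.repr v j • V.coeffMatrix ℬ i j := by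
  conv_lhs => rw [← ℬ.sum_repr v]
  simp only [map_sum, map_smul, Finsupp.coe_finsetSum, Finsupp.coe_smul, Finset.sum_apply,
    Pi.smul_apply, coeffMatrix]

theorem isMultiplicativeMatrix_coeffMatrix : IsMultiplicativeMatrix k (V.coeffMatrix ℬ) where
  comul_apply i j := by
    have h := congr(equivFinsuppOfBasisLeft ℬ ($(V.coassoc) (ℬ j)) i)
    simpa [coaction_basis, sum_tmul, Finsupp.single_apply, eq_comm] using h
  counit_apply i j := by
    have h := congr(equivFinsuppOfBasisLeft ℬ $(V.counit_coaction (ℬ j)) i)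
    simpa [coaction_basis, Finsupp.single_apply, Matrix.one_apply, eq_comm] using h

theorem lTensor_coaction_eq_tmul_one_iff (g : B →ₗ[k] R) (v : V.V) :
    g.lTensor V.V (V.coaction v) = v ⊗ₜ[k] (1 : R) ↔
      (V.coeffMatrix ℬ).map g *ᵥ (algebraMap k R ∘ ℬ.repr v) = algebraMap k R ∘ ℬ.repr v := by
  rw [← (equivFinsuppOfBasisLeft ℬ).injective.eq_iff, Finsupp.ext_iff, funext_iff]
  refine forall_congr' fun i => ?_
  simp only [equivFinsuppOfBasisLeft_lTensor, equivFinsuppOfBasisLeft_coaction, map_sum,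
    map_smul, equivFinsuppOfBasisLeft_apply_tmul_apply, Matrix.mulVec, dotProduct,
    Matrix.map_apply, Function.comp_apply]
  simp only [Algebra.smul_def, one_mul, mul_comm]

theorem intertwines_iff (W : FdComod k B) {κ : Type u} [Fintype κ] [DecidableEq κ]
    (ℬ' : Module.Basis κ k W.V) (φ : V.V →ₗ[k] W.V) (g : B →ₗ[k] R) :
    (∀ v, g.lTensor W.V (W.coaction (φ v)) = φ.rTensor R (g.lTensor V.V (V.coaction v))) ↔
      (W.coeffMatrix ℬ').map g * (LinearMap.toMatrix ℬ ℬ' φ).map (algebraMap k R) =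
        (LinearMap.toMatrix ℬ ℬ' φ).map (algebraMap k R) * (V.coeffMatrix ℬ).map g := by
  let F := g.lTensor W.V ∘ₗ W.coaction ∘ₗ φ
  let G := φ.rTensor R ∘ₗ g.lTensor V.V ∘ₗ V.coaction
  have hbasis : (∀ v, F v = G v) ↔ ∀ j, F (ℬ j) = G (ℬ j) :=
    ⟨fun h j => h (ℬ j), fun h => LinearMap.congr_fun (ℬ.ext h)⟩
  refine hbasis.trans ?_
  rw [Matrix.ext_iff.symm.trans forall_comm]
  refine forall_congr' fun j => ?_
  rw [← (equivFinsuppOfBasisLeft ℬ').injective.eq_iff, Finsupp.ext_iff]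
  refine forall_congr' fun i => ?_
  simp only [F, G, LinearMap.comp_apply, equivFinsuppOfBasisLeft_lTensor,
    equivFinsuppOfBasisLeft_coaction, equivFinsuppOfBasisLeft_rTensor ℬ ℬ', map_sum, map_smul,
    Matrix.mul_apply, Matrix.map_apply, LinearMap.toMatrix_apply, Module.Basis.repr_self,
    Finsupp.single_apply]
  simp [Algebra.smul_def, mul_comm]

end Coordinates

-- An `abbrev`, so that the instances on `(ofMatrix A hA).V` unify with those of `ι → k`.
noncomputable abbrev ofMatrix (A : Matrix ι ι B) (hA : IsMultiplicativeMatrix k A) :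
    FdComod k B where
  V := ι → k
  coaction := (Pi.basisFun k ι).constr k fun j => ∑ i, Pi.basisFun k ι i ⊗ₜ[k] A i j
  counit_coaction v := by
    have h : (counit (R := k)).lTensor (ι → k) ∘ₗ
        (Pi.basisFun k ι).constr k (fun j => ∑ i, Pi.basisFun k ι i ⊗ₜ[k] A i j) =
        (TensorProduct.mk k (ι → k) k).flip 1 := by
      refine (Pi.basisFun k ι).ext fun j => ?_
      simp [hA.counit_apply, Matrix.one_apply, TensorProduct.tmul_ite]
    exact LinearMap.congr_fun h v
  coassoc := (Pi.basisFun k ι).ext fun j => by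
    simp only [Pi.basisFun_apply, LinearMap.coe_comp, LinearEquiv.coe_coe, Function.comp_apply,
      Module.Basis.constr_apply_fintype, Pi.basisFun_equivFun, LinearEquiv.refl_apply,
      Fintype.sum_single_smul, one_smul, map_sum, LinearMap.rTensor_tmul, sum_tmul, assoc_tmul,
      LinearMap.lTensor_tmul, hA.comul_apply, tmul_sum]
    exact Finset.sum_comm

theorem coeffMatrix_ofMatrix (A : Matrix ι ι B) (hA : IsMultiplicativeMatrix k A) :
    (ofMatrix A hA).coeffMatrix (Pi.basisFun k ι) = A := by
  ext i j
  simp [coeffMatrix, Pi.single_apply]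

theorem lTensor_coaction_vec_eq_tmul_one_iff {κ : Type u} [Fintype κ] [DecidableEq κ]
    {A : Matrix ι ι B} {P : Matrix κ κ B} (hA : IsMultiplicativeMatrix k A)
    (hP : IsMultiplicativeMatrix k P) (g : B →ₐ[k] R) (Φ : Matrix κ ι k) :
    g.toLinearMap.lTensor _ ((ofMatrix _ (hA.transpose_antipode.kronecker hP)).coaction Φ.vec) =
        Φ.vec ⊗ₜ[k] (1 : R) ↔
      P.map g * Φ.map (algebraMap k R) = Φ.map (algebraMap k R) * A.map g := by
  refine (lTensor_coaction_eq_tmul_one_iff (ofMatrix _ (hA.transpose_antipode.kronecker hP))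
    (Pi.basisFun k (ι × κ)) g.toLinearMap Φ.vec).trans ?_
  have hvec : algebraMap k R ∘ (Pi.basisFun k (ι × κ)).repr Φ.vec =
      (Φ.map (algebraMap k R)).vec := by
    ext
    simp [Matrix.vec]
  have hmap : ((A.map (antipode k))ᵀ ⊗ₖ P).map g =
      ((A.map (antipode k)).map g)ᵀ ⊗ₖ P.map g := by
    ext
    simp
  rw [coeffMatrix_ofMatrix, hvec, AlgHom.coe_toLinearMap, hmap, Matrix.kronecker_mulVec_vec,
    Matrix.vec_inj, Matrix.transpose_transpose]
  refine Matrix.mul_mul_eq_iff_mul_eq_mul ?_ ?_ _ _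
  · rw [← Matrix.map_mul, hA.antipode_mul, Matrix.map_one _ (map_zero g) (map_one g)]
  · rw [← Matrix.map_mul, hA.mul_antipode, Matrix.map_one _ (map_zero g) (map_one g)]

end FdComod

section ObservableSubgroup

open TensorProduct LinearMap

variable {k B C : Type u} [Field k] [CommRing B] [CommRing C] [HopfAlgebra k B]
  [HopfAlgebra k C] (π : B →ₐc[k] C)

/- One of the equivalent definitions of `H = Spec C` being observable in `G = Spec B`. -/
def IsObservable : Prop :=
  ∀ W : FdComod k C, ∃ (V : FdComod k B) (f : W.V →ₗ[k] V.V),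
    Function.Injective f ∧
      ((LinearMap.lTensor V.V π.toLinearMap) ∘ₗ V.coaction) ∘ₗ f =
        (LinearMap.rTensor C f) ∘ₗ W.coaction

theorem lTensor_coaction_eq_tmul_one_of_ker_le (hπ : Function.Surjective π) {V : FdComod k B}
    {v : V.V} (hv : π.toLinearMap.lTensor V.V (V.coaction v) = v ⊗ₜ[k] (1 : C))
    {R : Type*} [CommRing R] [Algebra k R] (g : B →ₐ[k] R) (hg : ∀ b, π b = 0 → g b = 0) :
    g.toLinearMap.lTensor V.V (V.coaction v) = v ⊗ₜ[k] (1 : R) := by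
  have hker : RingHom.ker (π : B →ₐ[k] C).toRingHom ≤ RingHom.ker g.toRingHom :=
    fun b hb => hg b hb
  have hg' : g.toLinearMap =
      (AlgHom.liftOfSurjective _ hπ g hker).toLinearMap ∘ₗ π.toLinearMap := by
    ext b
    exact (AlgHom.liftOfSurjective_apply _ hπ g hker b).symm
  rw [hg', lTensor_comp, comp_apply, hv, lTensor_tmul, AlgHom.toLinearMap_apply, map_one]

theorem exists_intertwining_of_comul_mem_range (hobs : IsObservable π) {W : Submodule k B}
    [FiniteDimensional k W] (hW : ∀ w ∈ W, comul (R := k) w ∈ range (W.subtype.rTensor B)) :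
    ∃ (M : FdComod k B) (φ : W →ₗ[k] M.V), (∀ w, φ w = 0 ↔ π w = 0) ∧
      ∀ w, π.toLinearMap.lTensor M.V (M.coaction (φ w)) =
        φ.rTensor C (π.toLinearMap.lTensor W (Submodule.restrictComul hW w)) := by
  have hQ := Submodule.comul_mem_range_rTensor_map hW π.toCoalgHom
  obtain ⟨M, f, hf, hfπ⟩ := hobs (Submodule.toFdComod hQ)
  refine ⟨M, f ∘ₗ π.toLinearMap.submoduleMap W, fun w => ?_, fun w => ?_⟩
  · rw [comp_apply, map_eq_zero_iff f hf, ← Submodule.coe_eq_zero]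
    rfl
  · have h := LinearMap.congr_fun hfπ (π.toLinearMap.submoduleMap W w)
    simp only [comp_apply] at h
    rw [comp_apply, h, rTensor_comp_apply]
    exact congrArg _ (Submodule.restrictComul_map hW π.toCoalgHom w)

/- With `θ ∘ φ = ε` on `W`, apply `θ ⊗ id` to the equivariance at `w`: the left side vanishes
and the right side is `(ε ⊗ g) (Δ w) = g w`. -/
theorem apply_eq_zero_of_intertwining {W : Submodule k B}
    (hW : ∀ w ∈ W, comul (R := k) w ∈ range (W.subtype.rTensor B)) {M : FdComod k B}
    {φ : W →ₗ[k] M.V} (hφ : ker φ ≤ ker (counit ∘ₗ W.subtype)) {R : Type*} [CommRing R]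
    [Algebra k R] {g : B →ₗ[k] R}
    (hg : ∀ w, g.lTensor M.V (M.coaction (φ w)) =
      φ.rTensor R (g.lTensor W (Submodule.restrictComul hW w)))
    {w : W} (hw : φ w = 0) : g w = 0 := by
  obtain ⟨θ, hθ⟩ := Module.Dual.exists_comp_eq_of_ker_le φ _ hφ
  have h := congrArg (TensorProduct.lid k R ∘ θ.rTensor R) (hg w)
  simp only [Function.comp_apply, hw, map_zero, ← rTensor_comp_apply, hθ,
    Submodule.rTensor_counit_lTensor_restrictComul, lid_tmul, one_smul] at h
  exact h.symm

theorem exists_fixed_vector_of_map_eq_zero (hobs : IsObservable π) {b : B} (hb : π b = 0) :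
    ∃ (V : FdComod k B) (v : V.V), π.toLinearMap.lTensor V.V (V.coaction v) = v ⊗ₜ[k] (1 : C) ∧
      ∀ (R : Type u) [CommRing R] [Algebra k R] (g : B →ₐ[k] R),
        g.toLinearMap.lTensor V.V (V.coaction v) = v ⊗ₜ[k] (1 : R) → g b = 0 := by
  classical
  obtain ⟨W, hbW, _, hW⟩ := exists_finiteDimensional_comul_mem_range (k := k) b
  obtain ⟨M, φ, hφ, hπφ⟩ := exists_intertwining_of_comul_mem_range π hobs hW
  let ℬW := Module.Free.chooseBasis k W
  let ℬM := Module.Free.chooseBasis k M.V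
  have hA := (Submodule.toFdComod hW).isMultiplicativeMatrix_coeffMatrix ℬW
  have hP := M.isMultiplicativeMatrix_coeffMatrix ℬM
  refine ⟨FdComod.ofMatrix _ (hA.transpose_antipode.kronecker hP),
    (LinearMap.toMatrix ℬW ℬM φ).vec, ?_, fun R _ _ g hg => ?_⟩
  · exact (FdComod.lTensor_coaction_vec_eq_tmul_one_iff hA hP (π : B →ₐ[k] C) _).mpr
      (((Submodule.toFdComod hW).intertwines_iff ℬW M ℬM φ π.toLinearMap).mp hπφ)
  · have hgφ := ((Submodule.toFdComod hW).intertwines_iff ℬW M ℬM φ g.toLinearMap).mpr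
      ((FdComod.lTensor_coaction_vec_eq_tmul_one_iff hA hP g _).mp hg)
    refine apply_eq_zero_of_intertwining (w := ⟨b, hbW⟩) hW (fun w hw => ?_) hgφ ((hφ _).mpr hb)
    rw [mem_ker, comp_apply, Submodule.subtype_apply, ← CoalgHomClass.counit_comp_apply π,
      (hφ w).mp hw, map_zero]

end ObservableSubgroup

/-- Let `H ≤ G` be affine group schemes over `k`, with `H` the closed subgroup
given by a surjection of Hopf algebras `π : 𝒪(G) → 𝒪(H)`.  If every finite-dimensional
representation of `H` embeds equivariantly into the restriction of a finite-dimensional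
representation of `G`, then `H` is the intersection of a family of stabilizers `G_v` of
vectors `v` in finite-dimensional `G`-representations: there are `G`-comodules `Vᵢ` with
vectors `vᵢ` such that for every commutative `k`-algebra `R`, a point `g ∈ G(R)` lies in
`H(R)` (i.e. kills `ker π`) iff it fixes each `1 ⊗ vᵢ` in `R ⊗ Vᵢ`. -/
theorem stmt_18 {k B C : Type u} [Field k] [CommRing B] [CommRing C]
    [HopfAlgebra k B] [HopfAlgebra k C] (π : B →ₐc[k] C)
    (hπ : Function.Surjective π)
    (hobs : ∀ W : FdComod k C, ∃ (V : FdComod k B) (f : W.V →ₗ[k] V.V),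
      Function.Injective f ∧
        ((LinearMap.lTensor V.V π.toLinearMap) ∘ₗ V.coaction) ∘ₗ f =
          (LinearMap.rTensor C f) ∘ₗ W.coaction) :
    ∃ (ι : Type u) (Vfam : ι → FdComod k B) (v : ∀ i, (Vfam i).V),
      ∀ (R : Type u) [CommRing R] [Algebra k R] (g : B →ₐ[k] R),
        ((∀ b : B, π b = 0 → g b = 0) ↔
          ∀ i, (LinearMap.lTensor (Vfam i).V g.toLinearMap) ((Vfam i).coaction (v i)) =
            (v i) ⊗ₜ[k] (1 : R)) := by
  choose V v hπv hv using fun b : {b : B // π b = 0} =>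
    exists_fixed_vector_of_map_eq_zero π hobs b.2
  exact ⟨_, V, v, fun R _ _ g =>
    ⟨fun hg i => lTensor_coaction_eq_tmul_one_of_ker_le π hπ (hπv i) g hg,
      fun hg b hb => hv ⟨b, hb⟩ R g (hg _)⟩⟩
end
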